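/- Let Δv ∈ (0, V_max] and let μ = ρ·δ_0 be the measure concentrating all mass at velocity 0 (all vehicles at rest). Then the initial rate of change of the macroscopic momentum, defined for a transition kernel A by M(A) = η·[ ∫∫ ( ∫_{[0,V_max]} v dA(v_*,v^*)(v) ) dμ(v_*) dμ(v^*) − ρ·∫_{[0,V_max]} v dμ(v) ], equals M(A_δ) = η·ρ²·P·Δv for the δ model and M(A_χ) = (1/2)·η·ρ²·P·Δv for the χ model; in particular the built-in macroscopic acceleration of each model is proportional to the acceleration parameter Δv. -/

import Mathlib

/-!
When all vehicles are at rest, `μ = ρ·δ_0` collapses both outer integrals, so `M(A)` is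
`η ρ²` times the mean velocity of `A(0,0)`. The interaction part `δ_{min(0,0)} = δ_0`
contributes nothing, leaving `P` times the mean of `δ_{Δv}` (which is `Δv`) or of
`U([0, Δv])` (which is `Δv / 2`).
-/

open MeasureTheory

/-- The uniform (normalized Lebesgue) probability measure on the interval `[a,b]`. -/
noncomputable def uniformOn (a b : ℝ) : Measure ℝ :=
  (ENNReal.ofReal (b - a))⁻¹ • volume.restrict (Set.Icc a b)

/-- The δ-model transition kernel with acceleration parameter `Δv`:
`A_δ(vs,vf) = (1−P)·δ_{min(vs,vf)} + P·δ_{min(vs+Δv, Vmax)}`. -/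
noncomputable def deltaKernel (Vmax Δv P : ℝ) (vs vf : ℝ) : Measure ℝ :=
  ENNReal.ofReal (1 - P) • Measure.dirac (min vs vf)
    + ENNReal.ofReal P • Measure.dirac (min (vs + Δv) Vmax)

/-- The χ-model transition kernel with acceleration parameter `Δv`:
`A_χ(vs,vf) = (1−P)·δ_{min(vs,vf)} + P·U([vs, min(vs+Δv, Vmax)])`. -/
noncomputable def chiKernel (Vmax Δv P : ℝ) (vs vf : ℝ) : Measure ℝ :=
  ENNReal.ofReal (1 - P) • Measure.dirac (min vs vf)
    + ENNReal.ofReal P • uniformOn vs (min (vs + Δv) Vmax)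

/-- The measure `μ = ρ·δ_0` concentrating all mass at velocity `0`
(all vehicles at rest). -/
noncomputable def restMeasure (ρ : ℝ) : Measure ℝ :=
  ENNReal.ofReal ρ • Measure.dirac (0 : ℝ)

section Mixture

variable {α E : Type*} [MeasurableSpace α] [NormedAddCommGroup E] [NormedSpace ℝ E]
  {f : α → E} {μ ν : Measure α} {p q : ℝ}

theorem integral_ofReal_smul_add_ofReal_smul (hp : 0 ≤ p) (hq : 0 ≤ q)
    (hμ : Integrable f μ) (hν : Integrable f ν) :
    ∫ x, f x ∂(ENNReal.ofReal p • μ + ENNReal.ofReal q • ν)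
      = p • ∫ x, f x ∂μ + q • ∫ x, f x ∂ν := by
  rw [integral_add_measure (hμ.smul_measure ENNReal.ofReal_ne_top)
      (hν.smul_measure ENNReal.ofReal_ne_top),
    integral_smul_measure, integral_smul_measure,
    ENNReal.toReal_ofReal hp, ENNReal.toReal_ofReal hq]

theorem integral_ofReal_smul_dirac [CompleteSpace E] [MeasurableSingletonClass α] (hp : 0 ≤ p) (f : α → E)
    (a : α) : ∫ x, f x ∂(ENNReal.ofReal p • Measure.dirac a) = p • f a := by
  rw [integral_smul_measure, integral_dirac, ENNReal.toReal_ofReal hp]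

end Mixture

section UniformOn

variable {a b : ℝ}

theorem integrable_id_uniformOn (hab : a < b) : Integrable (fun v : ℝ ↦ v) (uniformOn a b) := by
  rw [uniformOn]
  refine Integrable.smul_measure ?_ (ENNReal.inv_ne_top.2 (by simpa using hab))
  exact continuous_id.integrableOn_Icc

theorem integral_id_uniformOn (hab : a < b) : ∫ v, v ∂(uniformOn a b) = (a + b) / 2 := by
  have hba : 0 < b - a := sub_pos.2 hab
  rw [uniformOn, integral_smul_measure, integral_Icc_eq_integral_Ioc,
    ← intervalIntegral.integral_of_le hab.le, integral_id, ENNReal.toReal_inv,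
    ENNReal.toReal_ofReal hba.le, smul_eq_mul]
  field_simp
  ring

end UniformOn

theorem integrable_id_dirac (a : ℝ) : Integrable (fun v : ℝ ↦ v) (Measure.dirac a) :=
  integrable_dirac enorm_lt_top

section Kernels

variable {Vmax Δv P : ℝ}

theorem integral_id_deltaKernel (hP0 : 0 ≤ P) (hP1 : P ≤ 1) (vs vf : ℝ) :
    ∫ v, v ∂(deltaKernel Vmax Δv P vs vf)
      = (1 - P) * min vs vf + P * min (vs + Δv) Vmax := by
  rw [deltaKernel, integral_ofReal_smul_add_ofReal_smul (by linarith) hP0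
    (integrable_id_dirac _) (integrable_id_dirac _), integral_dirac, integral_dirac,
    smul_eq_mul, smul_eq_mul]

theorem integral_id_chiKernel (hP0 : 0 ≤ P) (hP1 : P ≤ 1) {vs : ℝ}
    (hvs : vs < min (vs + Δv) Vmax) (vf : ℝ) :
    ∫ v, v ∂(chiKernel Vmax Δv P vs vf)
      = (1 - P) * min vs vf + P * ((vs + min (vs + Δv) Vmax) / 2) := by
  rw [chiKernel, integral_ofReal_smul_add_ofReal_smul (by linarith) hP0
    (integrable_id_dirac _) (integrable_id_uniformOn hvs), integral_dirac,
    integral_id_uniformOn hvs, smul_eq_mul, smul_eq_mul]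

end Kernels

/-- The paper's `M(A)`, the initial rate of change of the macroscopic momentum. -/
noncomputable def momentumRate (η ρ : ℝ) (μ : Measure ℝ) (A : ℝ → ℝ → Measure ℝ) : ℝ :=
  η * ((∫ vf, ∫ vs, (∫ v, v ∂(A vs vf)) ∂μ ∂μ) - ρ * ∫ v, v ∂μ)

theorem momentumRate_restMeasure {η ρ : ℝ} (hρ : 0 ≤ ρ) (A : ℝ → ℝ → Measure ℝ) :
    momentumRate η ρ (restMeasure ρ) A = η * ρ ^ 2 * ∫ v, v ∂(A 0 0) := by
  simp only [momentumRate, restMeasure, integral_ofReal_smul_dirac hρ, smul_eq_mul]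
  ring

theorem statement19_general (Vmax Δv ρ η P : ℝ) (hΔ0 : 0 < Δv)
    (hΔ : Δv ≤ Vmax) (hρ : 0 < ρ) (hP0 : 0 ≤ P) (hP1 : P ≤ 1) :
    (η * ((∫ vf, ∫ vs, (∫ v, v ∂(deltaKernel Vmax Δv P vs vf))
            ∂(restMeasure ρ) ∂(restMeasure ρ))
          - ρ * ∫ v, v ∂(restMeasure ρ))
        = η * ρ ^ 2 * P * Δv)
    ∧ (η * ((∫ vf, ∫ vs, (∫ v, v ∂(chiKernel Vmax Δv P vs vf))
            ∂(restMeasure ρ) ∂(restMeasure ρ))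
          - ρ * ∫ v, v ∂(restMeasure ρ))
        = (1 / 2) * η * ρ ^ 2 * P * Δv) := by
  have hmin : min (0 + Δv) Vmax = Δv := by rw [zero_add, min_eq_left hΔ]
  constructor
  · change momentumRate η ρ (restMeasure ρ) (deltaKernel Vmax Δv P) = _
    rw [momentumRate_restMeasure hρ.le, integral_id_deltaKernel hP0 hP1, hmin, min_self]
    ring
  · change momentumRate η ρ (restMeasure ρ) (chiKernel Vmax Δv P) = _
    rw [momentumRate_restMeasure hρ.le, integral_id_chiKernel hP0 hP1 (by rwa [hmin]), hmin,
      min_self]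
    ring

/-- Let `Δv ∈ (0, Vmax]` and `μ = ρ·δ_0` (all vehicles at rest).  The initial
rate of change of the macroscopic momentum
`M(A) = η[∫∫(∫ v dA(v_*,v^*)(v)) dμ(v_*) dμ(v^*) − ρ ∫ v dμ]`
equals `η·ρ²·P·Δv` for the δ model and `(1/2)·η·ρ²·P·Δv` for the χ model: the
built-in macroscopic acceleration of each model is proportional to `Δv`. -/
theorem statement19 (Vmax Δv ρ η P : ℝ) (hV : 0 < Vmax) (hΔ0 : 0 < Δv)
    (hΔ : Δv ≤ Vmax) (hρ : 0 < ρ) (hη : 0 < η) (hP0 : 0 ≤ P) (hP1 : P ≤ 1) :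
    (η * ((∫ vf, ∫ vs, (∫ v, v ∂(deltaKernel Vmax Δv P vs vf))
            ∂(restMeasure ρ) ∂(restMeasure ρ))
          - ρ * ∫ v, v ∂(restMeasure ρ))
        = η * ρ ^ 2 * P * Δv)
    ∧ (η * ((∫ vf, ∫ vs, (∫ v, v ∂(chiKernel Vmax Δv P vs vf))
            ∂(restMeasure ρ) ∂(restMeasure ρ))
          - ρ * ∫ v, v ∂(restMeasure ρ))
        = (1 / 2) * η * ρ ^ 2 * P * Δv) :=
  statement19_general Vmax Δv ρ η P hΔ0 hΔ hρ hP0 hP1
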